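/- arXiv:0801.3790 — 4 statements merged into one kernel-verified Lean document; each statement's English description precedes it below -/
import Mathlib

section
/- If C is a negative-weight directed cycle in G, then the point (-1/w(C))·χ(C) is a vertex (extreme point) of the polyhedron P(G,w); that is, it cannot be written as a proper convex combination of two distinct points of P(G,w). -/
/-! If `y = t • y₁ + (1 - t) • y₂` with `y₁, y₂ ∈ P(G,w)` and `0 < t < 1`, where
`y = (-1/w(C)) χ(C)`, then `y₁` and `y₂` vanish off `C`, because `y` does and all coordinates
are nonnegative. A conserved flow supported on a simple cycle is constant along it: every vertex
of the cycle has exactly one outgoing and one incoming arc of `C`. The normalisation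
`∑ w_e y_e = -1` then fixes that constant to be `-1/w(C)`, so `y₁ = y = y₂`. -/

open Finset

/-- A simple directed cycle, identified with its arc set: the arcs
`(f i, f (i+1))` of an injective map `f : ZMod (n+1) → V`. -/
def IsCycle {V : Type} [DecidableEq V] (C : Finset (V × V)) : Prop :=
  ∃ (n : ℕ) (f : ZMod (n + 1) → V), Function.Injective f ∧
    C = Finset.image (fun i => (f i, f (i + 1))) Finset.univ

/-- Characteristic vector of an arc set. -/
def chi {V : Type} [DecidableEq V] (C : Finset (V × V)) : V × V → ℝ :=
  fun e => if e ∈ C then 1 else 0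

/-- Membership in the polyhedron `P(G,w)` of negative-weight flows:
nonnegativity, support in `E`, flow conservation at every vertex, and
total weight `-1`. -/
def memP {V : Type} [Fintype V] [DecidableEq V] (E : Finset (V × V))
    (w : V × V → ℝ) (y : V × V → ℝ) : Prop :=
  (∀ e, 0 ≤ y e) ∧ (∀ e, e ∉ E → y e = 0) ∧
  (∀ u : V, ∑ e ∈ E.filter (fun e => e.1 = u), y e
          = ∑ e ∈ E.filter (fun e => e.2 = u), y e) ∧
  (∑ e ∈ E, w e * y e = -1)

/-- A vertex (extreme point) of a convex set: a member which is not a proper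
convex combination of two distinct members. -/
def IsVertexOf {α : Type*} [AddCommGroup α] [Module ℝ α] (P : Set α) (y : α) : Prop :=
  y ∈ P ∧ ¬ ∃ y₁ ∈ P, ∃ y₂ ∈ P, y₁ ≠ y₂ ∧
    ∃ t : ℝ, 0 < t ∧ t < 1 ∧ y = t • y₁ + (1 - t) • y₂

open Function

lemma Finset.sum_filter_of_eq_zero_off {α M : Type*} [AddCommMonoid M] {s t : Finset α}
    (hst : s ⊆ t) (p : α → Prop) [DecidablePred p] {g : α → M} (hg : ∀ a ∉ s, g a = 0) :
    ∑ a ∈ t.filter p, g a = ∑ a ∈ s.filter p, g a :=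
  (sum_subset (filter_subset_filter p hst) fun a hat has =>
    hg a fun ha => has (mem_filter.2 ⟨ha, (mem_filter.1 hat).2⟩)).symm

lemma ZMod.apply_eq_of_apply_add_one {n : ℕ} {β : Type*} {h : ZMod n → β}
    (hstep : ∀ i, h (i + 1) = h i) (i j : ZMod n) : h i = h j := by
  suffices key : ∀ k : ℤ, h k = h 0 by
    obtain ⟨k, rfl⟩ := ZMod.intCast_surjective i
    obtain ⟨l, rfl⟩ := ZMod.intCast_surjective j
    rw [key k, key l]
  intro k
  induction k using Int.induction_on with
  | zero => simp
  | succ k ih => push_cast at ih ⊢; rw [hstep, ih]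
  | pred k ih => push_cast at ih ⊢; rw [← ih, ← hstep, sub_add_cancel]

section CycleArcs

variable {V : Type} [DecidableEq V] {n : ℕ} {f : ZMod (n + 1) → V}

lemma filter_fst_image_arcs (hf : Injective f) (i : ZMod (n + 1)) :
    (univ.image fun j => (f j, f (j + 1))).filter (fun e => e.1 = f i)
      = {(f i, f (i + 1))} := by
  ext e
  simp only [mem_filter, mem_image, mem_univ, true_and, mem_singleton]
  constructor
  · rintro ⟨⟨j, rfl⟩, hj⟩
    rw [hf hj]
  · rintro rfl
    exact ⟨⟨i, rfl⟩, rfl⟩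

lemma filter_snd_image_arcs (hf : Injective f) (i : ZMod (n + 1)) :
    (univ.image fun j => (f j, f (j + 1))).filter (fun e => e.2 = f i)
      = {(f (i - 1), f i)} := by
  ext e
  simp only [mem_filter, mem_image, mem_univ, true_and, mem_singleton]
  constructor
  · rintro ⟨⟨j, rfl⟩, hj⟩
    rw [← hf hj, add_sub_cancel_right]
  · rintro rfl
    exact ⟨⟨i - 1, by rw [sub_add_cancel]⟩, rfl⟩

end CycleArcs

lemma IsCycle.card_filter_fst_eq_card_filter_snd {V : Type} [DecidableEq V] {C : Finset (V × V)}
    (hC : IsCycle C) (u : V) :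
    #(C.filter fun e => e.1 = u) = #(C.filter fun e => e.2 = u) := by
  obtain ⟨n, f, hf, rfl⟩ := hC
  by_cases hu : u ∈ Set.range f
  · obtain ⟨i, rfl⟩ := hu
    rw [filter_fst_image_arcs hf, filter_snd_image_arcs hf, card_singleton, card_singleton]
  · simp only [Set.mem_range, not_exists] at hu
    rw [filter_eq_empty_iff.2, filter_eq_empty_iff.2]
    all_goals
      intro e he
      obtain ⟨j, -, rfl⟩ := mem_image.1 he
    exacts [hu (j + 1), hu j]

lemma IsCycle.exists_forall_eq_of_conservation {V : Type} [DecidableEq V] {M : Type*}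
    [AddCommMonoid M] {C : Finset (V × V)} (hC : IsCycle C) {g : V × V → M}
    (hcons : ∀ u, ∑ e ∈ C.filter (fun e => e.1 = u), g e
      = ∑ e ∈ C.filter (fun e => e.2 = u), g e) :
    ∃ c, ∀ e ∈ C, g e = c := by
  obtain ⟨n, f, hf, rfl⟩ := hC
  have hstep : ∀ i, g (f (i + 1), f (i + 1 + 1)) = g (f i, f (i + 1)) := fun i => by
    simpa [filter_fst_image_arcs hf, filter_snd_image_arcs hf] using hcons (f (i + 1))
  refine ⟨g (f 0, f (0 + 1)), fun e he => ?_⟩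
  obtain ⟨i, -, rfl⟩ := mem_image.1 he
  exact ZMod.apply_eq_of_apply_add_one (h := fun i => g (f i, f (i + 1))) hstep i 0

section CharacteristicVector

variable {V : Type} [DecidableEq V] {C E : Finset (V × V)}

lemma sum_mul_const_mul_chi (hCE : C ⊆ E) (w : V × V → ℝ) (c : ℝ) :
    ∑ e ∈ E, w e * (c * chi C e) = c * ∑ e ∈ C, w e := by
  simp only [chi, mul_ite, mul_one, mul_zero, sum_ite_mem, inter_eq_right.2 hCE, mul_sum]
  exact sum_congr rfl fun _ _ => mul_comm _ _

lemma sum_filter_const_mul_chi (hCE : C ⊆ E) (p : V × V → Prop) [DecidablePred p] (c : ℝ) :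
    ∑ e ∈ E.filter p, c * chi C e = c * #(C.filter p) := by
  simp only [chi, mul_ite, mul_one, mul_zero, sum_ite_mem, sum_const, nsmul_eq_mul, mul_comm]
  rw [filter_inter, inter_eq_right.2 hCE]

end CharacteristicVector

section Polyhedron

variable {V : Type} [Fintype V] [DecidableEq V] {C E : Finset (V × V)} {w : V × V → ℝ}

lemma memP_neg_one_div_mul_chi (hC : IsCycle C) (hCE : C ⊆ E) (hneg : ∑ e ∈ C, w e < 0) :
    memP E w (fun e => (-1 / ∑ e ∈ C, w e) * chi C e) := by
  refine ⟨fun e => ?_, fun e he => ?_, fun u => ?_, ?_⟩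
  · refine mul_nonneg (div_nonneg_of_nonpos (by norm_num) hneg.le) ?_
    unfold chi; split_ifs <;> norm_num
  · simp [chi, show e ∉ C from fun h => he (hCE h)]
  · rw [sum_filter_const_mul_chi hCE, sum_filter_const_mul_chi hCE,
      hC.card_filter_fst_eq_card_filter_snd]
  · rw [sum_mul_const_mul_chi hCE, div_mul_cancel₀ _ hneg.ne]

lemma memP.eq_of_eq_zero_off_cycle {y : V × V → ℝ} (hy : memP E w y) (hC : IsCycle C)
    (hCE : C ⊆ E) (hyC : ∀ e ∉ C, y e = 0) :
    y = fun e => (-1 / ∑ e ∈ C, w e) * chi C e := by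
  obtain ⟨-, -, hcons, hweight⟩ := hy
  obtain ⟨c, hc⟩ := hC.exists_forall_eq_of_conservation (g := y) fun u => by
    rw [← sum_filter_of_eq_zero_off hCE _ hyC, ← sum_filter_of_eq_zero_off hCE _ hyC]
    exact hcons u
  have hy_eq : y = fun e => c * chi C e := funext fun e => by
    by_cases he : e ∈ C <;> simp [chi, he, hc, hyC]
  have hcw : c * ∑ e ∈ C, w e = -1 := by
    rw [← hweight, hy_eq, sum_mul_const_mul_chi hCE]
  have hw : ∑ e ∈ C, w e ≠ 0 := by
    rintro h
    rw [h, mul_zero] at hcw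
    norm_num at hcw
  rw [hy_eq, eq_div_of_mul_eq hw hcw]

end Polyhedron

/-- a negative cycle gives a vertex of `P(G,w)`. -/
theorem stmt_1 {V : Type} [Fintype V] [DecidableEq V]
    (E : Finset (V × V)) (w : V × V → ℝ) (C : Finset (V × V))
    (hC : IsCycle C) (hCE : C ⊆ E) (hneg : ∑ e ∈ C, w e < 0) :
    IsVertexOf {y | memP E w y} (fun e => (-1 / ∑ e ∈ C, w e) * chi C e) := by
  refine ⟨memP_neg_one_div_mul_chi hC hCE hneg, ?_⟩
  rintro ⟨y₁, hy₁, y₂, hy₂, hne, t, ht₀, ht₁, hy⟩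
  have hvanish : ∀ e ∉ C, y₁ e = 0 ∧ y₂ e = 0 := fun e he => by
    have hsum : t * y₁ e + (1 - t) * y₂ e = 0 := by
      simpa [chi, he] using (congrFun hy e).symm
    have := hy₁.1 e
    have := hy₂.1 e
    constructor <;> nlinarith
  exact hne ((hy₁.eq_of_eq_zero_off_cycle hC hCE fun e he => (hvanish e he).1).trans
    (hy₂.eq_of_eq_zero_off_cycle hC hCE fun e he => (hvanish e he).2).symm)
end

section
/- Every vertex of P(G,w) has the form (-1/w(C))·χ(C) for some simple directed cycle C with w(C) < 0. Consequently, the vertices of P(G,w) are in one-to-one correspondence with the negative-weight directed cycles of (G,w). -/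
open Finset

/-!
Let `y` be a vertex. Flow conservation gives every arc carrying positive flow a successor arc
carrying positive flow, so the support of `y` contains a directed cycle `C`. With `W = w(C)`,
`d = χ(C) + W • y` is a circulation of weight zero vanishing off the support of `y`, hence
`y ± ε • d ∈ P` for small `ε > 0`. Extremality forces `d = 0`, i.e. `y = (-1/W) • χ(C)`, and
`y ≥ 0` forces `W < 0`. A nonzero multiple of `χ(C)` determines `C` as its support.
-/

open Function Filter Topology

section Vertex

variable {α : Type*} [AddCommGroup α] [Module ℝ α] {P : Set α} {y : α}

lemma IsVertexOf.eq_zero_of_add_mem_of_sub_mem {d : α} (hy : IsVertexOf P y)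
    (hadd : y + d ∈ P) (hsub : y - d ∈ P) : d = 0 := by
  by_contra hd
  refine hy.2 ⟨y + d, hadd, y - d, hsub, fun h => hd ?_, 1 / 2, by norm_num, by norm_num, by module⟩
  have h2 : (2 : ℝ) • d = 0 := by linear_combination (norm := module) h
  exact (smul_eq_zero.mp h2).resolve_left two_ne_zero

end Vertex

lemma Function.exists_iterate_mem_periodicPts {α : Type*} [Finite α] (f : α → α) (x : α) :
    ∃ k, f^[k] x ∈ periodicPts f := by
  obtain ⟨a, b, hab, heq⟩ := Finite.exists_ne_map_eq_of_infinite (f^[·] x)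
  wlog h : a < b generalizing a b
  · exact this b a hab.symm heq.symm (by omega)
  refine ⟨a, mk_mem_periodicPts (n := b - a) (by omega) ?_⟩
  change f^[b - a] (f^[a] x) = f^[a] x
  rw [← iterate_add_apply, Nat.sub_add_cancel h.le]
  exact heq.symm

lemma exists_pos_add_smul_nonneg_and_sub_smul_nonneg {ι : Type*} [Finite ι] {y d : ι → ℝ}
    (hy : 0 ≤ y) (hd : ∀ i, y i = 0 → d i = 0) :
    ∃ ε : ℝ, 0 < ε ∧ 0 ≤ y + ε • d ∧ 0 ≤ y - ε • d := by
  have hnear : ∀ i, ∀ᶠ ε in 𝓝 (0 : ℝ), ε * |d i| ≤ y i := by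
    intro i
    rcases (hy i).eq_or_lt with h | h
    · exact .of_forall fun ε => by simp [hd i h.symm, ← h]
    · refine ((tendsto_id.mul_const |d i|).eventually_lt_const ?_).mono fun ε => le_of_lt
      simpa using h
  obtain ⟨ε, hεd, hε⟩ := ((eventually_all.mpr hnear).filter_mono nhdsWithin_le_nhds |>.and
    (self_mem_nhdsWithin (s := Set.Ioi 0))).exists
  refine ⟨ε, hε, fun i => ?_, fun i => ?_⟩ <;>
  · simp only [Pi.zero_apply, Pi.add_apply, Pi.sub_apply, Pi.smul_apply, smul_eq_mul]
    nlinarith [hεd i, neg_abs_le (d i), le_abs_self (d i)]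

section Cycles

variable {V : Type} [DecidableEq V]

lemma IsCycle.nonempty {C : Finset (V × V)} (hC : IsCycle C) : C.Nonempty := by
  obtain ⟨n, f, -, rfl⟩ := hC
  exact Finset.univ_nonempty.image _

lemma IsCycle.sum_fst_eq_sum_snd {M : Type*} [AddCommMonoid M] {C : Finset (V × V)}
    (hC : IsCycle C) (φ : V → M) : ∑ e ∈ C, φ e.1 = ∑ e ∈ C, φ e.2 := by
  obtain ⟨n, f, hf, rfl⟩ := hC
  have hinj : Injective fun i => (f i, f (i + 1)) := fun i j h => hf (congrArg Prod.fst h)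
  rw [Finset.sum_image hinj.injOn, Finset.sum_image hinj.injOn]
  exact (Equiv.sum_comp (Equiv.addRight 1) (fun i => φ (f i))).symm

lemma exists_isCycle_of_mapsTo [Finite V] {f : V → V} {s : Set V} (hs : s.Nonempty)
    (hf : Set.MapsTo f s s) : ∃ C, IsCycle C ∧ ∀ e ∈ C, e.1 ∈ s ∧ e.2 = f e.1 := by
  obtain ⟨x₀, hx₀⟩ := hs
  obtain ⟨k, hk⟩ := exists_iterate_mem_periodicPts f x₀
  set x := f^[k] x₀
  obtain ⟨n, hn⟩ : ∃ n, minimalPeriod f x = n + 1 :=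
    Nat.exists_eq_add_one.mpr (minimalPeriod_pos_of_mem_periodicPts hk)
  set g : ZMod (n + 1) → V := fun i => f^[i.val] x
  have hg : ∀ m : ℕ, g m = f^[m] x := fun m => by
    simp only [g, ZMod.val_natCast, ← hn, iterate_mod_minimalPeriod_eq]
  have hg_succ : ∀ i, g (i + 1) = f (g i) := fun i => by
    rw [← ZMod.natCast_zmod_val i, ← Nat.cast_succ, hg, hg, iterate_succ_apply']
  have hinj : Injective g := fun i j hij => ZMod.val_injective _ <|
    iterate_injOn_Iio_minimalPeriod (by simpa [hn] using i.val_lt) (by simpa [hn] using j.val_lt)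
      hij
  refine ⟨_, ⟨n, g, hinj, rfl⟩, ?_⟩
  simp only [Finset.mem_image, Finset.mem_univ, true_and, forall_exists_index]
  rintro _ i rfl
  exact ⟨hf.iterate _ (hf.iterate k hx₀), hg_succ i⟩

lemma exists_isCycle_subset [Finite V] {S : Finset (V × V)} (hS : S.Nonempty)
    (hout : ∀ e ∈ S, ∃ x, (e.2, x) ∈ S) : ∃ C, IsCycle C ∧ C ⊆ S := by
  classical
  -- follow some arc of `S` out of each vertex; a periodic orbit of this map is a cycle in `S`
  let next : V → V := fun v => if h : ∃ x, (v, x) ∈ S then h.choose else v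
  have hnext : ∀ v, (∃ x, (v, x) ∈ S) → (v, next v) ∈ S := fun v h => by
    simpa only [next, dif_pos h] using h.choose_spec
  obtain ⟨C, hC, hCS⟩ := exists_isCycle_of_mapsTo (f := next) (s := {v | ∃ x, (v, x) ∈ S})
    (by obtain ⟨e, he⟩ := hS; exact ⟨e.1, e.2, he⟩) fun v hv => hout _ (hnext v hv)
  refine ⟨C, hC, fun e he => ?_⟩
  obtain ⟨h₁, h₂⟩ := hCS e he
  rw [← Prod.mk.eta (p := e), h₂]
  exact hnext _ h₁

end Cycles

section Flows

variable {V : Type} [DecidableEq V]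

def circulations (E : Finset (V × V)) : Submodule ℝ (V × V → ℝ) where
  carrier := {d | (∀ e, e ∉ E → d e = 0) ∧ ∀ u : V, ∑ e ∈ E.filter (fun e => e.1 = u), d e
    = ∑ e ∈ E.filter (fun e => e.2 = u), d e}
  add_mem' := by
    rintro a b ⟨ha, ha'⟩ ⟨hb, hb'⟩
    exact ⟨fun e he => by simp [ha e he, hb e he],
      fun u => by simp only [Pi.add_apply, Finset.sum_add_distrib, ha' u, hb' u]⟩
  zero_mem' := by simp
  smul_mem' := by
    rintro c a ⟨ha, ha'⟩
    exact ⟨fun e he => by simp [ha e he],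
      fun u => by simp only [Pi.smul_apply, smul_eq_mul, ← Finset.mul_sum, ha' u]⟩

lemma sum_mul_chi {C E : Finset (V × V)} (hCE : C ⊆ E) (g : V × V → ℝ) :
    ∑ e ∈ E, g e * chi C e = ∑ e ∈ C, g e := by
  simp only [chi, mul_ite, mul_one, mul_zero, Finset.sum_ite_mem, Finset.inter_eq_right.mpr hCE]

lemma chi_mem_circulations {C E : Finset (V × V)} (hC : IsCycle C) (hCE : C ⊆ E) :
    chi C ∈ circulations E := by
  have hdeg : ∀ p : V × V → Prop, [DecidablePred p] →
      ∑ e ∈ E.filter p, chi C e = ∑ e ∈ C, if p e then (1 : ℝ) else 0 := fun p _ => by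
    rw [Finset.sum_filter, ← sum_mul_chi hCE]
    simp only [boole_mul]
  refine ⟨fun e he => if_neg fun h => he (hCE h), fun u => ?_⟩
  rw [hdeg, hdeg]
  exact hC.sum_fst_eq_sum_snd fun v => if v = u then 1 else 0

lemma exists_pos_out_arc_of_pos {E : Finset (V × V)} {y : V × V → ℝ} (hy₀ : 0 ≤ y)
    (hy : y ∈ circulations E) {e : V × V} (he : 0 < y e) : ∃ x, 0 < y (e.2, x) := by
  by_contra! hout
  have heE : e ∈ E := by_contra fun h => he.ne' (hy.1 e h)
  have hin : y e ≤ ∑ e' ∈ E.filter (fun e' => e'.2 = e.2), y e' :=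
    Finset.single_le_sum (fun e' _ => hy₀ e') (Finset.mem_filter.mpr ⟨heE, rfl⟩)
  have hout' : ∑ e' ∈ E.filter (fun e' => e'.1 = e.2), y e' ≤ 0 :=
    Finset.sum_nonpos fun e' he' => by
      simpa [← (Finset.mem_filter.mp he').2] using hout e'.2
  linarith [hy.2 e.2]

lemma eq_of_smul_chi_eq {C₁ C₂ : Finset (V × V)} {c₁ c₂ : ℝ} (h₁ : c₁ ≠ 0) (h₂ : c₂ ≠ 0)
    (h : (fun e => c₁ * chi C₁ e) = fun e => c₂ * chi C₂ e) : C₁ = C₂ := by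
  ext e
  have := congrFun h e
  by_cases e ∈ C₁ <;> by_cases e ∈ C₂ <;> simp_all [chi]

variable [Fintype V] {E : Finset (V × V)} {w y : V × V → ℝ}

lemma memP.mem_circulations (hy : memP E w y) : y ∈ circulations E := ⟨hy.2.1, hy.2.2.1⟩

lemma memP.mem_of_pos (hy : memP E w y) {e : V × V} (he : 0 < y e) : e ∈ E :=
  by_contra fun h => he.ne' (hy.2.1 e h)

lemma memP.add_smul (hy : memP E w y) {d : V × V → ℝ} (hd : d ∈ circulations E)
    (hwd : ∑ e ∈ E, w e * d e = 0) {t : ℝ} (ht : 0 ≤ y + t • d) : memP E w (y + t • d) := by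
  have hmem := add_mem hy.mem_circulations (Submodule.smul_mem _ t hd)
  refine ⟨ht, hmem.1, hmem.2, ?_⟩
  simp only [Pi.add_apply, Pi.smul_apply, smul_eq_mul, mul_add, Finset.sum_add_distrib,
    mul_left_comm _ t, ← Finset.mul_sum, hy.2.2.2, hwd]
  ring

lemma memP.exists_isCycle_pos (hy : memP E w y) : ∃ C, IsCycle C ∧ ∀ e ∈ C, 0 < y e := by
  obtain ⟨e, -, he⟩ := Finset.exists_ne_zero_of_sum_ne_zero (s := E) (f := fun e => w e * y e)
    (by rw [hy.2.2.2]; norm_num)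
  obtain ⟨C, hC, hCS⟩ := exists_isCycle_subset (S := Finset.univ.filter fun e => 0 < y e)
    ⟨e, by simpa using (hy.1 e).lt_of_ne (right_ne_zero_of_mul he).symm⟩
    fun e he => by
      simpa using exists_pos_out_arc_of_pos hy.1 hy.mem_circulations (by simpa using he)
  exact ⟨C, hC, fun e he => by simpa using hCS he⟩

lemma IsVertexOf.sum_neg_and_eq_smul_chi {C : Finset (V × V)}
    (hy : IsVertexOf {z | memP E w z} y) (hC : IsCycle C) (hCy : ∀ e ∈ C, 0 < y e) :
    ∑ e ∈ C, w e < 0 ∧ y = fun e => (-1 / ∑ e ∈ C, w e) * chi C e := by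
  have hyP : memP E w y := hy.1
  have hCE : C ⊆ E := fun e he => hyP.mem_of_pos (hCy e he)
  set W := ∑ e ∈ C, w e
  -- a weight-zero circulation vanishing off the support of `y`, so `y ± ε • d` stay in `P`
  set d := chi C + W • y
  have hd : d ∈ circulations E :=
    add_mem (chi_mem_circulations hC hCE) (Submodule.smul_mem _ W hyP.mem_circulations)
  have hwd : ∑ e ∈ E, w e * d e = 0 := by
    simp only [d, Pi.add_apply, Pi.smul_apply, smul_eq_mul, mul_add, Finset.sum_add_distrib,
      sum_mul_chi hCE, mul_left_comm _ W, ← Finset.mul_sum, hyP.2.2.2]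
    ring
  have hsupp : ∀ e, y e = 0 → d e = 0 := fun e he => by
    have : e ∉ C := fun h => (hCy e h).ne' he
    simp [d, chi, this, he]
  obtain ⟨ε, hε, hadd, hsub⟩ :=
    exists_pos_add_smul_nonneg_and_sub_smul_nonneg (fun e => hyP.1 e) hsupp
  have hεd : ε • d = 0 := hy.eq_zero_of_add_mem_of_sub_mem (hyP.add_smul hd hwd hadd)
    (by rw [sub_eq_add_neg, ← neg_smul] at hsub ⊢; exact hyP.add_smul hd hwd hsub)
  have hchi : ∀ e, chi C e = -W * y e := fun e => by
    have := congrFun ((smul_eq_zero.mp hεd).resolve_left hε.ne') e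
    simp only [d, Pi.add_apply, Pi.smul_apply, smul_eq_mul, Pi.zero_apply] at this
    linarith
  obtain ⟨e₀, he₀⟩ := hC.nonempty
  have hW : W < 0 := by
    have h₁ := hchi e₀
    simp only [chi, if_pos he₀] at h₁
    nlinarith [hCy e₀ he₀]
  refine ⟨hW, funext fun e => ?_⟩
  rw [hchi]
  field_simp [hW.ne]

end Flows

/-- every vertex of `P(G,w)` is `(-1/w(C))·χ(C)` for a negative cycle `C`,
and distinct negative cycles give distinct such points, so the vertices are in
one-to-one correspondence with the negative cycles. -/
theorem stmt_5 {V : Type} [Fintype V] [DecidableEq V]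
    (E : Finset (V × V)) (w : V × V → ℝ) :
    (∀ y : V × V → ℝ, IsVertexOf {z | memP E w z} y →
      ∃ C : Finset (V × V), IsCycle C ∧ C ⊆ E ∧ (∑ e ∈ C, w e) < 0 ∧
        y = fun e => (-1 / ∑ e ∈ C, w e) * chi C e) ∧
    (∀ C₁ C₂ : Finset (V × V),
      IsCycle C₁ → C₁ ⊆ E → (∑ e ∈ C₁, w e) < 0 →
      IsCycle C₂ → C₂ ⊆ E → (∑ e ∈ C₂, w e) < 0 →
      (fun e => (-1 / ∑ e ∈ C₁, w e) * chi C₁ e)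
        = (fun e => (-1 / ∑ e ∈ C₂, w e) * chi C₂ e) → C₁ = C₂) := by
  refine ⟨fun y hy => ?_, fun C₁ C₂ _ _ hw₁ _ _ hw₂ h => ?_⟩
  · obtain ⟨C, hC, hCy⟩ := hy.1.exists_isCycle_pos
    exact ⟨C, hC, fun e he => hy.1.mem_of_pos (hCy e he), hy.sum_neg_and_eq_smul_chi hC hCy⟩
  · exact eq_of_smul_chi_eq (div_ne_zero (by norm_num) hw₁.ne) (div_ne_zero (by norm_num) hw₂.ne)
      h
end

section
/- A 2-cycle of (G,w) is a pair (C₁,C₂) of simple directed cycles with w(C₁) < 0, w(C₂) > 0, such that C₁ ∪ C₂ contains no directed cycle other than C₁ and C₂. Then every 2-cycle is either (a) the union of two arc-disjoint cycles C₁ and C₂, or (b) the arc-disjoint union of three directed paths P₁, P₂, P₃ such that C₁ = P₁ ∪ P₂ and C₂ = P₁ ∪ P₃. -/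
open Finset

/-- A simple directed path with at least one arc, identified with its arc set. -/
def IsPath {V : Type} [DecidableEq V] (P : Finset (V × V)) : Prop :=
  ∃ (n : ℕ) (f : Fin (n + 2) → V), Function.Injective f ∧
    P = Finset.image (fun i : Fin (n + 1) => (f i.castSucc, f i.succ)) Finset.univ

/-- A 2-cycle: a negative cycle and a positive cycle whose union contains no
other cycle. -/
def IsTwoCycle {V : Type} [Fintype V] [DecidableEq V] (E : Finset (V × V))
    (w : V × V → ℝ) (C₁ C₂ : Finset (V × V)) : Prop :=
  IsCycle C₁ ∧ IsCycle C₂ ∧ C₁ ⊆ E ∧ C₂ ⊆ E ∧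
  (∑ e ∈ C₁, w e) < 0 ∧ 0 < (∑ e ∈ C₂, w e) ∧
  ∀ C : Finset (V × V), IsCycle C → C ⊆ C₁ ∪ C₂ → C = C₁ ∨ C = C₂

/-!
Write `C₁` as a closed walk `f`. If the two cycles differ but share an arc, some arc of `C₁` lying
in `C₂` is followed by an arc of `C₁` not in `C₂`. From there, walk along `C₁` up to the first
return to a vertex of `C₂`, then along `C₂` back to the start. This is a cycle inside `C₁ ∪ C₂`
with an arc outside `C₂`, so it is `C₁`. Hence `C₁` is an excursion avoiding the arcs of `C₂`
followed by a stretch of arcs of `C₂`: both `C₁ \ C₂` and `C₁ ∩ C₂` are paths, and by symmetry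
so is `C₂ \ C₁`.
-/

open Function

section Arcs

variable {V : Type} [DecidableEq V]

def walkArcs (x : ℕ → V) (r : ℕ) : Finset (V × V) :=
  (range r).image fun k => (x k, x (k + 1))

def cycleArcs {n : ℕ} (f : ZMod (n + 1) → V) : Finset (V × V) :=
  univ.image fun i => (f i, f (i + 1))

theorem isCycle_iff {C : Finset (V × V)} :
    IsCycle C ↔ ∃ (n : ℕ) (f : ZMod (n + 1) → V), Injective f ∧ C = cycleArcs f :=
  Iff.rfl

theorem mem_walkArcs {x : ℕ → V} {r : ℕ} {e : V × V} :
    e ∈ walkArcs x r ↔ ∃ k < r, (x k, x (k + 1)) = e := by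
  simp [walkArcs]

theorem walkArcs_congr {x y : ℕ → V} {r : ℕ} (h : ∀ k ≤ r, x k = y k) :
    walkArcs x r = walkArcs y r :=
  image_congr fun k hk => by
    have hk : k < r := mem_range.1 hk
    rw [h k hk.le, h (k + 1) hk]

theorem walkArcs_mono (x : ℕ → V) {r s : ℕ} (h : r ≤ s) : walkArcs x r ⊆ walkArcs x s :=
  image_subset_image (range_mono h)

theorem walkArcs_add (x : ℕ → V) (a b : ℕ) :
    walkArcs x (a + b) = walkArcs x a ∪ walkArcs (fun k => x (a + k)) b := by
  rw [walkArcs, range_add, image_union, map_eq_image, image_image]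
  rfl

theorem walkArcs_add_subset_of_subset {x : ℕ → V} {d r : ℕ} {B : Finset (V × V)}
    (hx : Set.InjOn x (Set.Iio (d + r))) (h : walkArcs x (d + r) ⊆ walkArcs x d ∪ B) :
    walkArcs (fun k => x (d + k)) r ⊆ B := by
  intro e he
  obtain ⟨k, hk, rfl⟩ := mem_walkArcs.1 he
  rcases mem_union.1 (h (mem_walkArcs.2 ⟨d + k, by omega, rfl⟩)) with hA | hB
  · obtain ⟨t, ht, heq⟩ := mem_walkArcs.1 hA
    have := hx (by simp; omega) (by simp; omega) (congrArg Prod.fst heq)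
    omega
  · exact hB

theorem isPath_walkArcs {x : ℕ → V} {r : ℕ} (hr : r ≠ 0) (hx : Set.InjOn x (Set.Iic r)) :
    IsPath (walkArcs x r) := by
  obtain ⟨s, rfl⟩ := Nat.exists_eq_succ_of_ne_zero hr
  refine ⟨s, fun i => x i, fun i j hij =>
    Fin.ext (hx (Nat.lt_succ_iff.1 i.isLt) (Nat.lt_succ_iff.1 j.isLt) hij), ?_⟩
  ext e
  simp [mem_walkArcs, Fin.exists_iff]

omit [DecidableEq V] in
theorem injOn_comp_add {n : ℕ} {f : ZMod (n + 1) → V} (hf : Injective f) (a : ZMod (n + 1)) :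
    Set.InjOn (fun k : ℕ => f (a + k)) (Set.Iio (n + 1)) := fun k hk l hl h => by
  have := add_left_cancel (hf h)
  rwa [ZMod.natCast_eq_natCast_iff', Nat.mod_eq_of_lt hk, Nat.mod_eq_of_lt hl] at this

theorem cycleArcs_eq_walkArcs {n : ℕ} (f : ZMod (n + 1) → V) (a : ZMod (n + 1)) :
    cycleArcs f = walkArcs (fun k => f (a + k)) (n + 1) := by
  ext e
  simp only [cycleArcs, mem_image, mem_univ, true_and, mem_walkArcs]
  constructor
  · rintro ⟨i, rfl⟩
    refine ⟨(i - a).val, ZMod.val_lt _, ?_⟩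
    simp only [Nat.cast_add, ZMod.natCast_zmod_val, Nat.cast_one]
    ring_nf
  · rintro ⟨k, -, rfl⟩
    exact ⟨a + k, by push_cast; ring_nf⟩

theorem isCycle_walkArcs {x : ℕ → V} {N : ℕ} (hx : Set.InjOn x (Set.Iio (N + 1)))
    (hclose : x (N + 1) = x 0) : IsCycle (walkArcs x (N + 1)) := by
  set f : ZMod (N + 1) → V := fun z => x z.val
  have hf : ∀ k ≤ N + 1, f (0 + k) = x k := by
    intro k hk
    simp only [f, zero_add, ZMod.val_natCast]
    rcases hk.lt_or_eq with hk | rfl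
    · rw [Nat.mod_eq_of_lt hk]
    · rw [Nat.mod_self, hclose]
  refine ⟨N, f, fun a b hab => ZMod.val_injective _ (hx (ZMod.val_lt a) (ZMod.val_lt b) hab), ?_⟩
  rw [← walkArcs_congr hf]
  exact (cycleArcs_eq_walkArcs f 0).symm

end Arcs

section Cycles

variable {V : Type} [DecidableEq V] {n : ℕ} {f : ZMod (n + 1) → V}

theorem ZMod.forall_of_imp_add_one {N : ℕ} [NeZero N] {P : ZMod N → Prop} {a : ZMod N}
    (ha : P a) (hP : ∀ i, P i → P (i + 1)) (b : ZMod N) : P b := by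
  have hk : ∀ k : ℕ, P (a + k) := by
    intro k
    induction k with
    | zero => simpa using ha
    | succ k ih => simpa [add_assoc] using hP _ ih
  simpa using hk (b - a).val

theorem mem_range_of_mem_cycleArcs {u v : V} (h : (u, v) ∈ cycleArcs f) :
    u ∈ Set.range f ∧ v ∈ Set.range f := by
  obtain ⟨i, -, hi⟩ := mem_image.1 h
  exact ⟨⟨i, congrArg Prod.fst hi⟩, ⟨i + 1, congrArg Prod.snd hi⟩⟩

theorem eq_of_mem_cycleArcs (hf : Injective f) {u v v' : V} (h : (u, v) ∈ cycleArcs f)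
    (h' : (u, v') ∈ cycleArcs f) : v = v' := by
  obtain ⟨i, -, hi⟩ := mem_image.1 h
  obtain ⟨j, -, hj⟩ := mem_image.1 h'
  simp only [Prod.mk.injEq] at hi hj
  rw [← hi.2, ← hj.2, hf (hi.1.trans hj.1.symm)]

theorem exists_mem_cycleArcs_of_mem {u v : V} (h : (u, v) ∈ cycleArcs f) :
    ∃ w, (v, w) ∈ cycleArcs f := by
  obtain ⟨i, -, ⟨⟩⟩ := mem_image.1 h
  exact ⟨f (i + 1 + 1), mem_image_of_mem _ (mem_univ (i + 1))⟩

theorem IsCycle.eq_of_subset {C₁ C₂ : Finset (V × V)} (h₁ : IsCycle C₁) (h₂ : IsCycle C₂)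
    (hsub : C₁ ⊆ C₂) : C₁ = C₂ := by
  obtain ⟨n, f, -, rfl⟩ := isCycle_iff.1 h₁
  obtain ⟨m, g, hg, rfl⟩ := isCycle_iff.1 h₂
  refine hsub.antisymm ?_
  have h0 : (f 0, f (0 + 1)) ∈ cycleArcs f := mem_image_of_mem _ (mem_univ 0)
  obtain ⟨b, -, hb⟩ := mem_image.1 (hsub h0)
  -- The arcs of `C₂` lying in `C₁` are closed under successor: out-arcs in `C₂` are unique.
  have hall : ∀ i, (g i, g (i + 1)) ∈ cycleArcs f := by
    refine ZMod.forall_of_imp_add_one (a := b) (by rwa [hb]) ?_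
    intro i hi
    obtain ⟨w, hw⟩ := exists_mem_cycleArcs_of_mem hi
    rwa [eq_of_mem_cycleArcs hg (hsub hw) (mem_image_of_mem _ (mem_univ (i + 1)))] at hw
  intro e he
  obtain ⟨i, -, rfl⟩ := mem_image.1 he
  exact hall i

end Cycles

section Detour

variable {V : Type} [DecidableEq V] {m : ℕ} {g : ZMod (m + 1) → V}

theorem isCycle_walkArcs_union (hg : Injective g) {x : ℕ → V} {d : ℕ} (hd : 0 < d)
    (hx : Set.InjOn x (Set.Iio d)) (hmin : ∀ t, 0 < t → t < d → x t ∉ Set.range g)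
    {p q : ZMod (m + 1)} (hxd : x d = g p) (hx0 : x 0 = g q) :
    IsCycle (walkArcs x d ∪ walkArcs (fun k => g (p + k)) (q - p).val) := by
  set ℓ := (q - p).val
  have hℓ : ℓ < m + 1 := ZMod.val_lt _
  have hgq : g (p + ℓ) = x 0 := by simp [ℓ, hx0]
  have hinj := injOn_comp_add hg p
  set y : ℕ → V := fun k => if k < d then x k else g (p + (k - d : ℕ))
  have hcross : ∀ t s, t < d → s < ℓ → x t ≠ g (p + s) := by
    intro t s ht hs hts
    rcases Nat.eq_zero_or_pos t with rfl | ht0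
    · have := hinj (by simp; omega) (by simpa using hℓ) (hts.symm.trans hgq.symm)
      omega
    · exact hmin t ht0 ht ⟨_, hts.symm⟩
  have hy : Set.InjOn y (Set.Iio (d + ℓ)) := by
    intro k hk l hl hkl
    simp only [Set.mem_Iio] at hk hl
    simp only [y] at hkl
    split_ifs at hkl with hkd hld hld
    · exact hx hkd hld hkl
    · exact absurd hkl (hcross k (l - d) hkd (by omega))
    · exact absurd hkl.symm (hcross l (k - d) hld (by omega))
    · have := hinj (by simp; omega) (by simp; omega) hkl
      omega
  have hsplit : walkArcs y (d + ℓ) = walkArcs x d ∪ walkArcs (fun k => g (p + k)) ℓ := by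
    rw [walkArcs_add]
    congr 1
    · refine walkArcs_congr fun k hk => ?_
      rcases hk.lt_or_eq with hk | rfl
      · simp [y, hk]
      · simp [y, hxd]
    · refine walkArcs_congr fun k _ => ?_
      simp [y]
  obtain ⟨N, hN⟩ : ∃ N, d + ℓ = N + 1 := ⟨d + ℓ - 1, by omega⟩
  rw [← hsplit, hN]
  refine isCycle_walkArcs (hN ▸ hy) ?_
  simp [y, hd, ← hN, hgq]

end Detour

section TwoCycles

variable {V : Type} [DecidableEq V]

theorem exists_first_return {m : ℕ} {g : ZMod (m + 1) → V} (hg : Injective g) {x : ℕ → V}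
    {N : ℕ} (hN : 0 < N) (hx : Set.InjOn x (Set.Iio N)) (hx0 : x 0 ∈ Set.range g)
    (hxN : x N ∈ Set.range g) :
    ∃ d, 0 < d ∧ d ≤ N ∧ (∀ t, 0 < t → t < d → x t ∉ Set.range g) ∧
      ∃ B ⊆ cycleArcs g, IsCycle (walkArcs x d ∪ B) := by
  classical
  have hex : ∃ t, 0 < t ∧ x t ∈ Set.range g := ⟨N, hN, hxN⟩
  obtain ⟨hd, p, hp⟩ := Nat.find_spec hex
  have hdN : Nat.find hex ≤ N := Nat.find_min' hex ⟨hN, hxN⟩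
  have hmin : ∀ t, 0 < t → t < Nat.find hex → x t ∉ Set.range g :=
    fun t ht htd hmem => Nat.find_min hex htd ⟨ht, hmem⟩
  obtain ⟨q, hq⟩ := hx0
  refine ⟨Nat.find hex, hd, hdN, hmin, _, ?_,
    isCycle_walkArcs_union hg hd (hx.mono (Set.Iio_subset_Iio (by omega))) hmin hp.symm hq.symm⟩
  intro e he
  obtain ⟨k, -, rfl⟩ := mem_walkArcs.1 he
  exact mem_image.2 ⟨p + k, mem_univ _, by push_cast; ring_nf⟩

theorem isPath_inter_and_sdiff_of_exit {n m : ℕ} {f : ZMod (n + 1) → V} {g : ZMod (m + 1) → V}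
    (hf : Injective f) (hg : Injective g)
    (hcyc : ∀ C, IsCycle C → C ⊆ cycleArcs f ∪ cycleArcs g → C = cycleArcs f ∨ C = cycleArcs g)
    {i : ZMod (n + 1)} (hin : (f i, f (i + 1)) ∈ cycleArcs g)
    (hout : (f (i + 1), f (i + 1 + 1)) ∉ cycleArcs g) :
    IsPath (cycleArcs f ∩ cycleArcs g) ∧ IsPath (cycleArcs f \ cycleArcs g) := by
  set x : ℕ → V := fun k => f (i + 1 + k)
  have hx : Set.InjOn x (Set.Iio (n + 1)) := injOn_comp_add hf _
  have hx01 : (x 0, x 1) = (f (i + 1), f (i + 1 + 1)) := by simp [x]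
  have hxn : x n = f i := by
    simp only [x, add_assoc]
    rw [add_comm (1 : ZMod (n + 1)), ← Nat.cast_succ, ZMod.natCast_self, add_zero]
  have hn : 0 < n := by
    refine Nat.pos_of_ne_zero fun hn => hout ?_
    subst hn
    have h : i + 1 = i := hf (by simpa [x] using hxn)
    rwa [h]
  obtain ⟨d, hd, hdn, hmin, B, hB, hD⟩ :=
    exists_first_return hg hn (hx.mono (Set.Iio_subset_Iio (Nat.le_succ n)))
      (by simpa [x] using (mem_range_of_mem_cycleArcs hin).2)
      (hxn ▸ (mem_range_of_mem_cycleArcs hin).1)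
  obtain ⟨r, hr⟩ : ∃ r, n + 1 = d + r := ⟨n + 1 - d, by omega⟩
  have hC₁ : cycleArcs f = walkArcs x (d + r) := hr ▸ cycleArcs_eq_walkArcs f (i + 1)
  have hDC₁ : walkArcs x d ∪ B = cycleArcs f := by
    refine (hcyc _ hD (union_subset ?_ (hB.trans subset_union_right))).resolve_right ?_
    · exact hC₁ ▸ (walkArcs_mono x (Nat.le_add_right d r)).trans subset_union_left
    · intro h
      exact hout (hx01 ▸ h ▸ mem_union_left _ (mem_walkArcs.2 ⟨0, hd, rfl⟩))
  have hdisj : Disjoint (walkArcs x d) (cycleArcs g) := by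
    refine disjoint_left.2 fun e he he₂ => ?_
    obtain ⟨t, ht, rfl⟩ := mem_walkArcs.1 he
    rcases Nat.eq_zero_or_pos t with rfl | ht0
    · exact hout (hx01 ▸ he₂)
    · exact hmin t ht0 ht (mem_range_of_mem_cycleArcs he₂).1
  have hsub : walkArcs (fun k => x (d + k)) r ⊆ cycleArcs g :=
    walkArcs_add_subset_of_subset (hr ▸ hx)
      (hC₁ ▸ hDC₁ ▸ union_subset_union (subset_refl _) hB)
  rw [hC₁, walkArcs_add, union_inter_distrib_right, union_sdiff_distrib,
    disjoint_iff_inter_eq_empty.1 hdisj, inter_eq_left.2 hsub,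
    sdiff_eq_self_of_disjoint hdisj, sdiff_eq_empty_iff_subset.2 hsub,
    empty_union, union_empty]
  have hshift : (fun k => x (d + k)) = fun k : ℕ => f (i + 1 + d + k) := by
    funext k
    simp [x, add_assoc]
  refine ⟨isPath_walkArcs (by omega) ?_,
    isPath_walkArcs hd.ne' (hx.mono (Set.Iic_subset_Iio.2 (by omega)))⟩
  rw [hshift]
  exact (injOn_comp_add hf _).mono (Set.Iic_subset_Iio.2 (by omega))

theorem isPath_inter_and_sdiff {C₁ C₂ : Finset (V × V)}
    (h₁ : IsCycle C₁) (h₂ : IsCycle C₂) (hne : C₁ ≠ C₂) (hint : ¬Disjoint C₁ C₂)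
    (hcyc : ∀ C, IsCycle C → C ⊆ C₁ ∪ C₂ → C = C₁ ∨ C = C₂) :
    IsPath (C₁ ∩ C₂) ∧ IsPath (C₁ \ C₂) := by
  have hnsub : ¬C₁ ⊆ C₂ := fun hsub => hne (h₁.eq_of_subset h₂ hsub)
  obtain ⟨n, f, hf, rfl⟩ := isCycle_iff.1 h₁
  obtain ⟨m, g, hg, rfl⟩ := isCycle_iff.1 h₂
  obtain ⟨i, hin, hout⟩ :
      ∃ i, (f i, f (i + 1)) ∈ cycleArcs g ∧ (f (i + 1), f (i + 1 + 1)) ∉ cycleArcs g := by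
    by_contra! hclosed
    obtain ⟨e, he₁, he₂⟩ := not_disjoint_iff.1 hint
    obtain ⟨a, -, rfl⟩ := mem_image.1 he₁
    refine hnsub fun e he => ?_
    obtain ⟨b, -, rfl⟩ := mem_image.1 he
    exact ZMod.forall_of_imp_add_one he₂ hclosed b
  exact isPath_inter_and_sdiff_of_exit hf hg hcyc hin hout

end TwoCycles

/-- every 2-cycle is either a pair of arc-disjoint cycles, or the
arc-disjoint union of three paths `P₁, P₂, P₃` with `C₁ = P₁ ∪ P₂` and
`C₂ = P₁ ∪ P₃`. -/
theorem stmt_8 {V : Type} [Fintype V] [DecidableEq V]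
    (E : Finset (V × V)) (w : V × V → ℝ) (C₁ C₂ : Finset (V × V))
    (h : IsTwoCycle E w C₁ C₂) :
    Disjoint C₁ C₂ ∨
    ∃ P₁ P₂ P₃ : Finset (V × V), IsPath P₁ ∧ IsPath P₂ ∧ IsPath P₃ ∧
      Disjoint P₁ P₂ ∧ Disjoint P₁ P₃ ∧ Disjoint P₂ P₃ ∧
      C₁ = P₁ ∪ P₂ ∧ C₂ = P₁ ∪ P₃ := by
  obtain ⟨hc₁, hc₂, -, -, hw₁, hw₂, hcyc⟩ := h
  refine or_iff_not_imp_left.2 fun hint => ?_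
  have hne : C₁ ≠ C₂ := by
    rintro rfl
    linarith
  obtain ⟨hP₁, hP₂⟩ := isPath_inter_and_sdiff hc₁ hc₂ hne hint hcyc
  obtain ⟨-, hP₃⟩ := isPath_inter_and_sdiff hc₂ hc₁ hne.symm (by rwa [disjoint_comm])
    fun C hC hsub => (hcyc C hC (union_comm C₁ C₂ ▸ hsub)).symm
  refine ⟨C₁ ∩ C₂, C₁ \ C₂, C₂ \ C₁, hP₁, hP₂, hP₃, (disjoint_sdiff_inter C₁ C₂).symm,
    inter_comm C₂ C₁ ▸ (disjoint_sdiff_inter C₂ C₁).symm, ?_, ?_, ?_⟩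
  · exact disjoint_sdiff_self_left.mono_right sdiff_subset
  · rw [union_comm, sdiff_union_inter]
  · rw [inter_comm, union_comm, sdiff_union_inter]
end

section
/- For each k ≥ 1, there exists a weighted directed graph (G,w) with O(k) vertices and arcs that has at least 2^k positive-weight simple directed cycles but only 2k 2-cycles. Concretely: take a directed cycle (x₁,y₁,x₂,y₂,…,x_k,y_k) of length 2k with all arcs of weight -1, and for each i add two parallel two-arc paths (x_i,z_i,y_i) and (x_i,z'_i,y_i), each arc of weight 2k. Then the number of positive-weight cycles in this graph exceeds 2^k, while the number of 2-cycles is exactly 2k. -/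
open Finset

/-- Vertices: `(0,i) = xᵢ`, `(1,i) = yᵢ`, `(2,i) = zᵢ`, `(3,i) = z'ᵢ`.  The arcs:
the base `2k`-cycle `xᵢ → yᵢ → xᵢ₊₁`, plus the parallel paths `xᵢ → zᵢ → yᵢ`
and `xᵢ → z'ᵢ → yᵢ`. -/
def gE (k : ℕ) [NeZero k] : Finset ((Fin 4 × ZMod k) × (Fin 4 × ZMod k)) :=
  (Finset.univ.image fun i : ZMod k => (((0 : Fin 4), i), ((1 : Fin 4), i))) ∪
  (Finset.univ.image fun i : ZMod k => (((1 : Fin 4), i), ((0 : Fin 4), i + 1))) ∪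
  (Finset.univ.image fun i : ZMod k => (((0 : Fin 4), i), ((2 : Fin 4), i))) ∪
  (Finset.univ.image fun i : ZMod k => (((2 : Fin 4), i), ((1 : Fin 4), i))) ∪
  (Finset.univ.image fun i : ZMod k => (((0 : Fin 4), i), ((3 : Fin 4), i))) ∪
  (Finset.univ.image fun i : ZMod k => (((3 : Fin 4), i), ((1 : Fin 4), i)))

/-- Arc weights: the base-cycle arcs (between `x`- and `y`-vertices) have
weight `-1`; all detour arcs have weight `2k`. -/
def gw (k : ℕ) [NeZero k] : (Fin 4 × ZMod k) × (Fin 4 × ZMod k) → ℝ :=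
  fun e => if e.1.1 ≤ 1 ∧ e.2.1 ≤ 1 then -1 else 2 * k

/-!
A cycle of this graph must run once around it, taking at each `i` one of the three routes from
`xᵢ` to `xᵢ₊₁` (directly through `yᵢ`, or through `zᵢ` or `z'ᵢ`); conversely each choice
`c : ZMod k → Fin 3` gives a cycle `cycleOf c`, obtained from the base `2k`-cycle by subdividing
arcs. The weight of `cycleOf c` is `-2k` for `c = 0` and at least `2k + 1` otherwise, so the `2^k`
choices that never use a direct arc `xᵢ → yᵢ` give positive cycles. In a 2-cycle the negative
cycle is `cycleOf 0`; since no cycle contains another, if the positive one detoured at two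
indices, the cycle detouring at only one of them would be a third cycle in their union. So it
detours at exactly one `i`, through `zᵢ` or `z'ᵢ`: `2k` choices.
-/

namespace IsCycle

variable {V : Type} [DecidableEq V] {C D : Finset (V × V)} {a b b' v : V}

theorem of_periodic {G : ℕ → V} {N : ℕ} (hN : 0 < N) (hG : Function.Periodic G N)
    (hinj : Set.InjOn G (Set.Iio N)) :
    IsCycle ((range N).image fun m => (G m, G (m + 1))) := by
  obtain ⟨n, rfl⟩ : ∃ n, N = n + 1 := ⟨N - 1, by omega⟩
  have hsucc (j : ZMod (n + 1)) : G (j + 1).val = G (j.val + 1) := by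
    rw [← hG.map_mod_nat (j.val + 1), ← ZMod.val_natCast (n + 1) (j.val + 1), Nat.cast_succ,
      ZMod.natCast_zmod_val]
  refine ⟨n, fun j => G j.val, fun i j h => ZMod.val_injective _ (hinj i.val_lt j.val_lt h), ?_⟩
  ext e
  simp only [mem_image, mem_range, mem_univ, true_and, hsucc]
  constructor
  · rintro ⟨m, hm, rfl⟩
    exact ⟨m, by rw [ZMod.val_natCast, Nat.mod_eq_of_lt hm]⟩
  · rintro ⟨j, rfl⟩
    exact ⟨j.val, j.val_lt, rfl⟩

theorem of_periodic_of_subset {G : ℕ → V} {N : ℕ} (hN : 0 < N) (hG : Function.Periodic G N)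
    (hinj : Set.InjOn G (Set.Iio N)) (hD : ∀ m < N, (G m, G (m + 1)) ∈ D) (hcard : #D ≤ N) :
    IsCycle D := by
  have harc : Set.InjOn (fun m => (G m, G (m + 1))) (range N : Set ℕ) :=
    fun m hm m' hm' h => hinj (by simpa using hm) (by simpa using hm') (Prod.mk.inj h).1
  convert of_periodic hN hG hinj using 1
  refine (eq_of_subset_of_card_le (image_subset_iff.2 fun m hm => hD m (mem_range.1 hm)) ?_).symm
  rwa [card_image_of_injOn harc, card_range]

theorem nonempty_s18 (hC : IsCycle C) : C.Nonempty := by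
  obtain ⟨n, f, -, rfl⟩ := hC
  exact univ_nonempty.image _

theorem exists_succ (hC : IsCycle C) (h : (a, b) ∈ C) : ∃ d, (b, d) ∈ C := by
  obtain ⟨n, f, -, rfl⟩ := hC
  obtain ⟨i, -, hi⟩ := mem_image.1 h
  obtain ⟨rfl, rfl⟩ := Prod.mk.inj hi
  exact ⟨f (i + 1 + 1), mem_image.2 ⟨i + 1, mem_univ _, rfl⟩⟩

theorem exists_pred (hC : IsCycle C) (h : (a, b) ∈ C) : ∃ d, (d, a) ∈ C := by
  obtain ⟨n, f, -, rfl⟩ := hC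
  obtain ⟨i, -, hi⟩ := mem_image.1 h
  obtain ⟨rfl, rfl⟩ := Prod.mk.inj hi
  exact ⟨f (i - 1), mem_image.2 ⟨i - 1, mem_univ _, by rw [sub_add_cancel]⟩⟩

theorem snd_unique (hC : IsCycle C) (h : (a, b) ∈ C) (h' : (a, b') ∈ C) : b = b' := by
  obtain ⟨n, f, hf, rfl⟩ := hC
  obtain ⟨i, -, hi⟩ := mem_image.1 h
  obtain ⟨j, -, hj⟩ := mem_image.1 h'
  simp only [Prod.mk.injEq] at hi hj
  rw [← hi.2, ← hj.2, hf (hi.1.trans hj.1.symm)]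

-- Starting from any of its arcs, `D` is forced to follow `C` all the way round.
theorem eq_of_subset_s18 (hC : IsCycle C) (hD : IsCycle D) (hDC : D ⊆ C) : D = C := by
  obtain ⟨n, f, hf, rfl⟩ := hC
  have step (j : ZMod (n + 1)) (hj : (f j, f (j + 1)) ∈ D) : (f (j + 1), f (j + 1 + 1)) ∈ D := by
    obtain ⟨d, hd⟩ := hD.exists_succ hj
    obtain ⟨l, -, hl⟩ := mem_image.1 (hDC hd)
    obtain ⟨hfl, rfl⟩ := Prod.mk.inj hl
    rwa [hf hfl] at hd
  obtain ⟨e, he⟩ := hD.nonempty_s18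
  obtain ⟨j₀, -, rfl⟩ := mem_image.1 (hDC he)
  have hall (m : ℕ) : (f (j₀ + m), f (j₀ + m + 1)) ∈ D := by
    induction m with
    | zero => simpa using he
    | succ m ih => simpa [add_assoc] using step _ ih
  refine hDC.antisymm fun e he' => ?_
  obtain ⟨j, -, rfl⟩ := mem_image.1 he'
  simpa using hall (j - j₀).val

theorem subdivide (hC : IsCycle C) (hab : (a, b) ∈ C) (hv : ∀ e ∈ C, e.1 ≠ v) :
    IsCycle (insert (a, v) (insert (v, b) (C.erase (a, b)))) := by
  obtain ⟨n, f, hf, rfl⟩ := hC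
  obtain ⟨i₀, -, hi₀⟩ := mem_image.1 hab
  obtain ⟨rfl, rfl⟩ := Prod.mk.inj hi₀
  have hfv (j : ZMod (n + 1)) : f j ≠ v := hv _ (mem_image_of_mem _ (mem_univ j))
  -- walk round the old cycle from `b` to `a`, then visit `v`
  set H : ℕ → V := fun m => if m = n + 1 then v else f (i₀ + 1 + m) with hH
  set G : ℕ → V := fun m => H (m % (n + 2)) with hG
  have hGH {m : ℕ} (hm : m < n + 2) : G m = H m := by simp only [hG, Nat.mod_eq_of_lt hm]
  have hper : Function.Periodic G (n + 2) := fun m => by simp only [hG, Nat.add_mod_right]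
  have hinj : Set.InjOn G (Set.Iio (n + 2)) := by
    intro m hm m' hm' h
    simp only [Set.mem_Iio] at hm hm'
    simp only [hGH hm, hGH hm', hH] at h
    split_ifs at h with h₁ h₂ h₂
    · omega
    · exact absurd h.symm (hfv _)
    · exact absurd h (hfv _)
    · have := (ZMod.natCast_eq_natCast_iff' m m' (n + 1)).1 (by simpa using hf h)
      rwa [Nat.mod_eq_of_lt (by omega), Nat.mod_eq_of_lt (by omega)] at this
  have hGn : G n = f i₀ := by
    have := ZMod.natCast_self (n + 1)
    push_cast at this
    simp [hGH (by omega : n < n + 2), hH, add_assoc, add_comm 1 (n : ZMod (n + 1)), this]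
  refine of_periodic_of_subset (by omega) hper hinj (fun m hm => ?_) ?_
  · rcases (by omega : m < n ∨ m = n ∨ m = n + 1) with hm | rfl | rfl
    · refine mem_insert_of_mem (mem_insert_of_mem (mem_erase.2 ⟨fun h => ?_, ?_⟩))
      · have := hinj (by simp; omega) (by simp) ((Prod.mk.inj h).1.trans hGn.symm)
        omega
      · rw [hGH (by omega), hGH (by omega)]
        simp only [hH, if_neg (show m ≠ n + 1 by omega), if_neg (show m + 1 ≠ n + 1 by omega)]
        exact mem_image.2 ⟨i₀ + 1 + m, mem_univ _, by push_cast; ring_nf⟩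
    · rw [hGn, hGH (by omega)]
      simp [hH]
    · rw [hGH (by omega), ← zero_add (n + 1 + 1), hper, hGH (by omega)]
      simp [hH]
  · refine (card_insert_le _ _).trans (Nat.add_le_add_right (card_insert_le _ _) 1) |>.trans ?_
    have := (card_image_le (s := univ) (f := fun i => (f i, f (i + 1)))).trans_eq
      (by simp : #(univ : Finset (ZMod (n + 1))) = n + 1)
    rw [card_erase_of_mem hab]
    omega

end IsCycle

theorem eq_zero_or_eq_single_of_forall {ι M : Type*} [DecidableEq ι] [Zero M] {f : ι → M}
    {i : ι} {a : M} (h : ∀ j, f j = 0 ∨ f j = (Pi.single i a : ι → M) j) :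
    f = 0 ∨ f = Pi.single i a := by
  by_cases hi : f i = 0
  · refine Or.inl (funext fun j => ?_)
    by_cases hj : j = i
    · rw [hj, hi, Pi.zero_apply]
    · simpa [Pi.single_eq_of_ne hj] using h j
  · refine Or.inr (funext fun j => ?_)
    by_cases hj : j = i
    · subst hj; simpa [hi] using h j
    · simpa [Pi.single_eq_of_ne hj] using h j

abbrev Arc (k : ℕ) := (Fin 4 × ZMod k) × (Fin 4 × ZMod k)

section Graph

variable {k : ℕ}

/-- The arcs of the path from `xᵢ = (0, i)` to `xᵢ₊₁` that leaves `xᵢ` towards `(ε.succ, i)`: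
directly to `yᵢ` for `ε = 0`, through `zᵢ` or `z'ᵢ` for `ε = 1, 2`. -/
def route (i : ZMod k) (ε : Fin 3) : Finset (Arc k) :=
  {((0, i), (ε.succ, i)), ((1, i), (0, i + 1))} ∪ if ε = 0 then ∅ else {((ε.succ, i), (1, i))}

theorem mem_route_iff {i : ZMod k} {ε : Fin 3} {e : Arc k} :
    e ∈ route i ε ↔ e = ((0, i), (ε.succ, i)) ∨ e = ((1, i), (0, i + 1)) ∨
      (ε ≠ 0 ∧ e = ((ε.succ, i), (1, i))) := by
  unfold route; split_ifs <;> simp [*]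

theorem fst_snd_of_mem_route {i : ZMod k} {ε : Fin 3} {e : Arc k} (he : e ∈ route i ε) :
    e.1.2 = i := by
  rcases mem_route_iff.1 he with rfl | rfl | ⟨-, rfl⟩ <;> rfl

variable [NeZero k]

def cycleOf (c : ZMod k → Fin 3) : Finset (Arc k) := univ.biUnion fun i => route i (c i)

theorem mem_cycleOf {c : ZMod k → Fin 3} {e : Arc k} :
    e ∈ cycleOf c ↔ e ∈ route e.1.2 (c e.1.2) := by
  simp only [cycleOf, mem_biUnion, mem_univ, true_and]
  exact ⟨fun ⟨i, he⟩ => fst_snd_of_mem_route he ▸ he, fun he => ⟨_, he⟩⟩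

theorem mem_gE {e : Arc k} : e ∈ gE k ↔ ∃ ε, e ∈ route e.1.2 ε := by
  obtain ⟨⟨a, i⟩, ⟨b, j⟩⟩ := e
  fin_cases a <;> fin_cases b <;> simp [gE, route, Fin.exists_fin_succ, eq_comm]

theorem cycleOf_subset_gE (c : ZMod k → Fin 3) : cycleOf c ⊆ gE k :=
  fun _ he => mem_gE.2 ⟨_, mem_cycleOf.1 he⟩

theorem fst_eq_of_mem_gE {u : Fin 4 × ZMod k} {i : ZMod k} {ε : Fin 3} (hε : ε ≠ 0)
    (h : (u, (ε.succ, i)) ∈ gE k) : u = (0, i) := by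
  obtain ⟨δ, h⟩ := mem_gE.1 h
  obtain ⟨a, j⟩ := u
  unfold route at h
  fin_cases ε <;> split_ifs at h <;> simp_all

theorem first_mem_cycleOf_iff {c : ZMod k → Fin 3} {i : ZMod k} {ε : Fin 3} :
    (((0, i), (ε.succ, i)) : Arc k) ∈ cycleOf c ↔ c i = ε := by
  rw [mem_cycleOf, mem_route_iff]
  simp [eq_comm]

theorem cycleOf_injective : Function.Injective (cycleOf (k := k)) := fun _ _ h =>
  funext fun _ => (first_mem_cycleOf_iff.1 (h ▸ first_mem_cycleOf_iff.2 rfl)).symm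

theorem cycleOf_subset_union_iff {a b c : ZMod k → Fin 3} :
    cycleOf c ⊆ cycleOf a ∪ cycleOf b ↔ ∀ i, c i = a i ∨ c i = b i := by
  constructor
  · intro h i
    have := h ((first_mem_cycleOf_iff (i := i)).2 rfl)
    simpa only [mem_union, first_mem_cycleOf_iff, eq_comm] using this
  · intro h e he
    rw [mem_cycleOf] at he
    rw [mem_union, mem_cycleOf, mem_cycleOf]
    rcases h e.1.2 with hc | hc <;> rw [hc] at he <;> simp [he]

theorem isCycle_cycleOf_zero : IsCycle (cycleOf (0 : ZMod k → Fin 3)) := by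
  -- the cycle `x₀ y₀ x₁ y₁ …`: `G (2 * i) = xᵢ` and `G (2 * i + 1) = yᵢ`
  set G : ℕ → Fin 4 × ZMod k := fun m => (if m % 2 = 0 then 0 else 1, ((m / 2 : ℕ) : ZMod k))
    with hG
  have hper : Function.Periodic G (2 * k) := fun m => by
    simp [hG, Nat.add_mul_mod_self_left, show (m + 2 * k) / 2 = m / 2 + k by omega]
  refine IsCycle.of_periodic_of_subset (by simp [NeZero.pos k]) hper ?_ ?_ ?_
  · intro m hm m' hm' h
    simp only [Set.mem_Iio] at hm hm'
    simp only [hG, Prod.mk.injEq, ZMod.natCast_eq_natCast_iff'] at h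
    rw [Nat.mod_eq_of_lt (show m / 2 < k by omega), Nat.mod_eq_of_lt (show m' / 2 < k by omega)] at h
    split_ifs at h <;> simp at h <;> omega
  · intro m _
    refine mem_biUnion.2 ⟨((m / 2 : ℕ) : ZMod k), mem_univ _, ?_⟩
    rcases Nat.even_or_odd' m with ⟨j, rfl | rfl⟩
    · simp [hG, route, show (2 * j + 1) / 2 = j by omega]
    · simp [hG, route, Nat.add_mod, show (2 * j + 1) / 2 = j by omega,
        show (2 * j + 1 + 1) / 2 = j + 1 by omega]
  · refine card_biUnion_le.trans ?_
    simp [route, mul_comm]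

theorem fst_ne_of_mem_cycleOf {c : ZMod k → Fin 3} {i : ZMod k} {ε : Fin 3} (hc : c i = 0)
    (hε : ε ≠ 0) {e : Arc k} (he : e ∈ cycleOf c) : e.1 ≠ (ε.succ, i) := by
  obtain ⟨⟨a, j⟩, b⟩ := e
  rintro ⟨⟨⟩, ⟨⟩⟩
  rw [mem_cycleOf, hc, mem_route_iff] at he
  fin_cases ε <;> simp_all

theorem cycleOf_update_eq_subdivide {c : ZMod k → Fin 3} {i : ZMod k} {ε : Fin 3}
    (hc : c i = 0) (hε : ε ≠ 0) :
    cycleOf (Function.update c i ε) = insert ((0, i), (ε.succ, i))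
      (insert ((ε.succ, i), (1, i)) ((cycleOf c).erase ((0, i), (1, i)))) := by
  ext ⟨⟨a, j⟩, ⟨b, j'⟩⟩
  simp only [mem_insert, mem_erase, mem_cycleOf]
  by_cases hj : j = i
  · subst hj
    fin_cases ε <;> simp_all [route] <;> fin_cases a <;> simp
  · simp [Prod.ext_iff, hj]

theorem isCycle_cycleOf (c : ZMod k → Fin 3) : IsCycle (cycleOf c) := by
  suffices ∀ T : Finset (ZMod k), ∀ c : ZMod k → Fin 3, (∀ i ∉ T, c i = 0) →
      IsCycle (cycleOf c) from this univ c (by simp)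
  intro T
  induction T using Finset.induction_on with
  | empty =>
    intro c hc
    rw [show c = 0 from funext fun i => hc i (notMem_empty i)]
    exact isCycle_cycleOf_zero
  | insert i T hi ih =>
    intro c hc
    have hc' : IsCycle (cycleOf (Function.update c i 0)) := by
      refine ih _ fun j hj => ?_
      by_cases hji : j = i
      · simp [hji]
      · simp [Function.update_of_ne hji, hc j (by simp [hji, hj])]
    by_cases hci : c i = 0
    · rwa [Function.update_eq_self_iff.2 hci.symm] at hc'
    · have h := cycleOf_update_eq_subdivide (Function.update_self i 0 c) hci
      rw [Function.update_idem, Function.update_eq_self] at h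
      rw [h]
      exact hc'.subdivide (first_mem_cycleOf_iff.2 (Function.update_self i 0 c))
        fun e he => fst_ne_of_mem_cycleOf (Function.update_self i 0 c) hci he

theorem exists_eq_cycleOf {C : Finset (Arc k)} (hC : IsCycle C) (hCE : C ⊆ gE k) :
    ∃ c, C = cycleOf c := by
  have hchoice (i : ZMod k) : ∃ ε : Fin 3, ∀ δ, ((0, i), (δ.succ, i)) ∈ C → δ = ε := by
    by_cases h : ∃ δ : Fin 3, (((0, i), (δ.succ, i)) : Arc k) ∈ C
    · obtain ⟨ε, hε⟩ := h
      exact ⟨ε, fun δ hδ => Fin.succ_injective _ (Prod.ext_iff.1 (hC.snd_unique hδ hε)).1⟩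
    · exact ⟨0, fun δ hδ => (h ⟨δ, hδ⟩).elim⟩
  choose c hc using hchoice
  refine ⟨c, (isCycle_cycleOf c).eq_of_subset_s18 hC fun e he => ?_⟩
  obtain ⟨ε, hε⟩ := mem_gE.1 (hCE he)
  rw [mem_cycleOf, mem_route_iff]
  generalize e.1.2 = i at hε ⊢
  rcases mem_route_iff.1 hε with rfl | rfl | ⟨hε0, rfl⟩
  · exact Or.inl (by rw [hc _ ε he])
  · exact Or.inr (Or.inl rfl)
  · obtain ⟨u, hu⟩ := hC.exists_pred he
    rw [fst_eq_of_mem_gE hε0 (hCE hu)] at hu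
    rw [hc _ ε hu] at hε0 ⊢
    exact Or.inr (Or.inr ⟨hε0, rfl⟩)

theorem sum_gw_route (i : ZMod k) (ε : Fin 3) :
    ∑ e ∈ route i ε, gw k e = if ε = 0 then -2 else (4 * k - 1 : ℝ) := by
  fin_cases ε <;> simp [route, gw] <;> ring

theorem sum_gw_cycleOf (c : ZMod k → Fin 3) :
    ∑ e ∈ cycleOf c, gw k e = ∑ i, if c i = 0 then -2 else (4 * k - 1 : ℝ) := by
  refine (sum_biUnion fun i _ j _ hij => disjoint_left.2 fun e hi hj => hij ?_).trans
    (sum_congr rfl fun i _ => sum_gw_route i (c i))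
  exact (fst_snd_of_mem_route hi).symm.trans (fst_snd_of_mem_route hj)

theorem sum_gw_cycleOf_zero : ∑ e ∈ cycleOf (0 : ZMod k → Fin 3), gw k e = -2 * k := by
  simp [sum_gw_cycleOf, mul_comm]

theorem sum_gw_cycleOf_pos {c : ZMod k → Fin 3} (hc : c ≠ 0) : 0 < ∑ e ∈ cycleOf c, gw k e := by
  obtain ⟨i, hi⟩ : ∃ i, c i ≠ 0 := Function.ne_iff.1 hc
  have hk : (1 : ℝ) ≤ k := by exact_mod_cast NeZero.one_le
  rw [sum_gw_cycleOf, ← add_sum_erase _ _ (mem_univ i), if_neg hi]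
  calc (0 : ℝ) < 4 * k - 1 + (k - 1) * -2 := by linarith
    _ = 4 * k - 1 + ∑ _j ∈ univ.erase i, (-2 : ℝ) := by
      simp [card_erase_of_mem, Nat.cast_sub NeZero.one_le]
    _ ≤ _ := by gcongr with j; split_ifs <;> linarith

theorem cycleOf_single_succ_injective :
    Function.Injective fun q : ZMod k × Fin 2 => cycleOf (Pi.single q.1 q.2.succ) := by
  rintro ⟨i, δ⟩ ⟨j, δ'⟩ h
  have h := cycleOf_injective h
  obtain rfl : i = j := by
    by_contra hij
    simpa [Pi.single_eq_of_ne hij] using congrFun h i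
  simpa using Pi.single_injective i h

theorem isTwoCycle_iff {C₁ C₂ : Finset (Arc k)} :
    IsTwoCycle (gE k) (gw k) C₁ C₂ ↔
      ∃ (i : ZMod k) (δ : Fin 2), (cycleOf 0, cycleOf (Pi.single i δ.succ)) = (C₁, C₂) := by
  have hk : (0 : ℝ) < k := by exact_mod_cast NeZero.pos k
  constructor
  · rintro ⟨h₁, h₂, hE₁, hE₂, hw₁, hw₂, hmin⟩
    obtain ⟨c₁, rfl⟩ := exists_eq_cycleOf h₁ hE₁
    obtain ⟨c₂, rfl⟩ := exists_eq_cycleOf h₂ hE₂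
    obtain rfl : c₁ = 0 := by_contra fun h => (sum_gw_cycleOf_pos h).not_gt hw₁
    obtain ⟨i, hi⟩ : ∃ i, c₂ i ≠ 0 := by
      by_contra! h
      rw [show c₂ = 0 from funext h, sum_gw_cycleOf_zero] at hw₂
      linarith
    obtain ⟨δ, hδ⟩ := Fin.exists_succ_eq.2 hi
    have hsub : cycleOf (Pi.single i (c₂ i)) ⊆ cycleOf 0 ∪ cycleOf c₂ := by
      refine cycleOf_subset_union_iff.2 fun j => ?_
      by_cases hj : j = i
      · simp [hj]
      · simp [Pi.single_eq_of_ne hj]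
    rcases hmin _ (isCycle_cycleOf _) hsub with h | h
    · exact absurd (congrFun (cycleOf_injective h) i) (by simpa using hi)
    · exact ⟨i, δ, by rw [← h, hδ]⟩
  · rintro ⟨i, δ, h⟩
    obtain ⟨rfl, rfl⟩ := Prod.mk.inj h
    refine ⟨isCycle_cycleOf _, isCycle_cycleOf _, cycleOf_subset_gE _, cycleOf_subset_gE _,
      by rw [sum_gw_cycleOf_zero]; linarith, sum_gw_cycleOf_pos ?_, fun C hC hsub => ?_⟩
    · simp
    obtain ⟨c, rfl⟩ := exists_eq_cycleOf hC
      (hsub.trans (union_subset (cycleOf_subset_gE _) (cycleOf_subset_gE _)))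
    rcases eq_zero_or_eq_single_of_forall (cycleOf_subset_union_iff.1 hsub) with rfl | rfl <;>
      simp

end Graph

theorem stmt_18_general (k : ℕ) [NeZero k] :
    2 ^ k ≤ Set.ncard {C : Finset ((Fin 4 × ZMod k) × (Fin 4 × ZMod k)) |
        IsCycle C ∧ C ⊆ gE k ∧ 0 < ∑ e ∈ C, gw k e} ∧
    Set.ncard {p : Finset ((Fin 4 × ZMod k) × (Fin 4 × ZMod k)) ×
        Finset ((Fin 4 × ZMod k) × (Fin 4 × ZMod k)) |
        IsTwoCycle (gE k) (gw k) p.1 p.2} = 2 * k := by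
  constructor
  · have hinj : Function.Injective fun c : ZMod k → Fin 2 => cycleOf fun i => (c i).succ :=
      fun c c' h => funext fun i => Fin.succ_injective _ (congrFun (cycleOf_injective h) i)
    calc 2 ^ k = (Set.range fun c : ZMod k → Fin 2 => cycleOf fun i => (c i).succ).ncard := by
          simp [Set.ncard_range_of_injective hinj]
      _ ≤ _ := by
        refine Set.ncard_le_ncard (Set.range_subset_iff.2 fun c => ?_)
        exact ⟨isCycle_cycleOf _, cycleOf_subset_gE _,
          sum_gw_cycleOf_pos fun h => Fin.succ_ne_zero _ (congrFun h 0)⟩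
  · have hset : {p : Finset (Arc k) × Finset (Arc k) | IsTwoCycle (gE k) (gw k) p.1 p.2} =
        Set.range fun q : ZMod k × Fin 2 => (cycleOf 0, cycleOf (Pi.single q.1 q.2.succ)) := by
      ext ⟨C₁, C₂⟩
      rw [Set.mem_range, Prod.exists]
      exact isTwoCycle_iff
    rw [hset, Set.ncard_range_of_injective
      fun q q' h => cycleOf_single_succ_injective (Prod.mk.inj h).2]
    simp [mul_comm]

/-- the graph `(gE k, gw k)` has at least `2^k` positive-weight
simple directed cycles, but exactly `2k` 2-cycles. -/
theorem stmt_18 (k : ℕ) (hk : 0 < k) [NeZero k] :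
    2 ^ k ≤ Set.ncard {C : Finset ((Fin 4 × ZMod k) × (Fin 4 × ZMod k)) |
        IsCycle C ∧ C ⊆ gE k ∧ 0 < ∑ e ∈ C, gw k e} ∧
    Set.ncard {p : Finset ((Fin 4 × ZMod k) × (Fin 4 × ZMod k)) ×
        Finset ((Fin 4 × ZMod k) × (Fin 4 × ZMod k)) |
        IsTwoCycle (gE k) (gw k) p.1 p.2} = 2 * k :=
  stmt_18_general k
end
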